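/- arXiv:2305.15877 — 4 statements merged into one kernel-verified Lean document; each statement's English description precedes it below -/
import Mathlib

section
/- Let α ∈ [0,1]. For every policy π, the bias of the IPS-α estimator satisfies |B(R̂_n^α(π))| ≤ E_{x∼ν, a∼π(·|x)}[1 − π0(a|x)^{1−α}]. -/
/-! The `n` samples are i.i.d., so the estimator has the mean of a single IPS term under
`ν ⊗ₘ κ`. Conditioning on the context and splitting by the logged action, the conditional-mean
hypothesis turns this into `∫ ∑ₐ π(a|x) c(x,a) π₀(a|x)^(1-α) dν`, so the bias is
`∫ ∑ₐ π(a|x) c(x,a) (π₀(a|x)^(1-α) - 1) dν`; since `|c| ≤ 1` and `π₀^(1-α) ≤ 1`, each summand is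
bounded by `π(a|x) (1 - π₀(a|x)^(1-α))`. A single IPS term is a.e. nonpositive, so it is
integrable under `ν ⊗ₘ κ` as soon as its conditional mean is integrable under `ν`. -/

open MeasureTheory ProbabilityTheory Real

theorem integral_sampleMean_pi {Ω : Type*} [MeasurableSpace Ω] {μ : Measure Ω}
    [IsProbabilityMeasure μ] {f : Ω → ℝ} (hf : Integrable f μ) {n : ℕ} (hn : n ≠ 0) :
    ∫ ω : Fin n → Ω, (n : ℝ)⁻¹ * ∑ i, f (ω i) ∂(Measure.pi fun _ => μ) = ∫ x, f x ∂μ := by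
  rw [integral_const_mul, integral_finsetSum _ fun i _ => integrable_comp_eval hf]
  simp only [integral_comp_eval (μ := fun _ : Fin n => μ) hf.aestronglyMeasurable,
    Finset.sum_const, Finset.card_univ, Fintype.card_fin, nsmul_eq_mul]
  field_simp

theorem integrable_snd_of_ae_mem_Icc {α : Type*} [MeasurableSpace α] {m : Measure (α × ℝ)}
    [IsFiniteMeasure m] {a b : ℝ} (h : ∀ᵐ p ∂m, p.2 ∈ Set.Icc a b) : Integrable Prod.snd m :=
  .of_bound measurable_snd.aestronglyMeasurable (max |a| |b|) <| by
    filter_upwards [h] with p hp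
    exact abs_le_max_abs_abs hp.1 hp.2

theorem MeasureTheory.Integrable.mul_comp_fst {ι β : Type*} [Fintype ι] [MeasurableSpace ι]
    [MeasurableSingletonClass ι] [MeasurableSpace β] {m : Measure (ι × β)} {f : ι × β → ℝ}
    (hf : Integrable f m) (w : ι → ℝ) : Integrable (fun p => f p * w p.1) m :=
  hf.mul_bdd ((measurable_of_finite w).comp measurable_fst).aestronglyMeasurable
    (ae_of_all _ fun p => Finset.single_le_sum (f := fun a => ‖w a‖)
      (fun _ _ => norm_nonneg _) (Finset.mem_univ p.1))

theorem integral_mul_comp_fst_eq_sum {ι β : Type*} [Fintype ι] [MeasurableSpace ι]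
    [MeasurableSingletonClass ι] [MeasurableSpace β] {m : Measure (ι × β)} {f : ι × β → ℝ}
    (hf : Integrable f m) (w : ι → ℝ) :
    ∫ p, f p * w p.1 ∂m = ∑ a, (∫ p in {p | p.1 = a}, f p ∂m) * w a := by
  have hfib : ∀ a : ι, MeasurableSet {p : ι × β | p.1 = a} := fun a =>
    measurable_fst (measurableSet_singleton a)
  have hcover : (⋃ a, {p : ι × β | p.1 = a}) = Set.univ :=
    Set.iUnion_eq_univ_iff.2 fun p => ⟨p.1, rfl⟩
  rw [← setIntegral_univ, ← hcover, integral_iUnion_fintype hfib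
    (fun a b hab => Set.disjoint_left.2 fun p ha hb => hab (ha.symm.trans hb))
    fun a => (hf.mul_comp_fst w).integrableOn]
  refine Finset.sum_congr rfl fun a _ => ?_
  rw [← integral_mul_const]
  exact setIntegral_congr_fun (hfib a) fun p hp => by rw [show p.1 = a from hp]

theorem integrable_compProd_of_ae_nonpos {X Y : Type*} [MeasurableSpace X] [MeasurableSpace Y]
    {μ : Measure X} [SFinite μ] {κ : Kernel X Y} [IsSFiniteKernel κ] {f : X × Y → ℝ}
    (hf : AEStronglyMeasurable f (μ ⊗ₘ κ)) (hfib : ∀ᵐ x ∂μ, Integrable (fun y => f (x, y)) (κ x))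
    (hnonpos : ∀ᵐ x ∂μ, ∀ᵐ y ∂(κ x), f (x, y) ≤ 0)
    (hint : Integrable (fun x => ∫ y, f (x, y) ∂(κ x)) μ) : Integrable f (μ ⊗ₘ κ) := by
  refine (Measure.integrable_compProd_iff hf).2 ⟨hfib, hint.neg.congr ?_⟩
  filter_upwards [hnonpos] with x hx
  rw [Pi.neg_apply, ← integral_neg]
  refine integral_congr_ae ?_
  filter_upwards [hx] with y hy
  rw [Real.norm_of_nonpos hy]

theorem abs_sum_mul_le_one {ι : Type*} [Fintype ι] {w v : ι → ℝ} (hw : ∀ a, 0 ≤ w a)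
    (hw1 : ∑ a, w a = 1) (hv : ∀ a, |v a| ≤ 1) : |∑ a, w a * v a| ≤ 1 :=
  calc |∑ a, w a * v a| ≤ ∑ a, |w a * v a| := Finset.abs_sum_le_sum_abs _ _
    _ ≤ ∑ a, w a := Finset.sum_le_sum fun a _ => by
        rw [abs_mul, abs_of_nonneg (hw a)]; exact mul_le_of_le_one_right (hw a) (hv a)
    _ = 1 := hw1

theorem integrable_sum_mul_of_abs_le_one {X ι : Type*} [MeasurableSpace X] [Fintype ι]
    {ν : Measure X} [IsFiniteMeasure ν] {w v : X → ι → ℝ} (hwm : ∀ a, Measurable fun x => w x a)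
    (hvm : ∀ a, Measurable fun x => v x a) (hw : ∀ x a, 0 ≤ w x a) (hw1 : ∀ x, ∑ a, w x a = 1)
    (hv : ∀ x a, |v x a| ≤ 1) : Integrable (fun x => ∑ a, w x a * v x a) ν :=
  .of_bound (Finset.measurable_sum _ fun a _ => (hwm a).mul (hvm a)).aestronglyMeasurable 1
    (ae_of_all _ fun x => abs_sum_mul_le_one (hw x) (hw1 x) (hv x))

theorem abs_sum_mul_sub_sum_mul_le {ι : Type*} [Fintype ι] {w c r : ι → ℝ} (hw : ∀ a, 0 ≤ w a)
    (hc : ∀ a, |c a| ≤ 1) (hr : ∀ a, r a ≤ 1) :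
    |∑ a, w a * (c a * r a) - ∑ a, w a * c a| ≤ ∑ a, w a * (1 - r a) := by
  rw [← Finset.sum_sub_distrib]
  refine (Finset.abs_sum_le_sum_abs _ _).trans (Finset.sum_le_sum fun a _ => ?_)
  rw [show w a * (c a * r a) - w a * c a = -(w a * (1 - r a) * c a) by ring, abs_neg, abs_mul,
    abs_of_nonneg (mul_nonneg (hw a) (sub_nonneg.2 (hr a)))]
  exact mul_le_of_le_one_right (mul_nonneg (hw a) (sub_nonneg.2 (hr a))) (hc a)

theorem mul_div_rpow_eq_mul_rpow_one_sub {p : ℝ} (hp : 0 < p) (q α : ℝ) :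
    p * (q / p ^ α) = q * p ^ (1 - α) := by
  rw [rpow_sub hp, rpow_one]; ring

section IPS

variable {X : Type*} {K : ℕ} {p0 pl c : X → Fin K → ℝ} {α : ℝ}

variable (p0 pl α) in
noncomputable abbrev ipsTerm (y : X × Fin K × ℝ) : ℝ :=
  y.2.2 * pl y.1 y.2.1 / p0 y.1 y.2.1 ^ α

theorem measurable_ipsTerm [MeasurableSpace X] (hp0 : ∀ a, Measurable fun x => p0 x a)
    (hpl : ∀ a, Measurable fun x => pl x a) : Measurable (ipsTerm p0 pl α) := by
  have := measurable_from_prod_countable_left (f := Function.uncurry p0) hp0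
  have := measurable_from_prod_countable_left (f := Function.uncurry pl) hpl
  unfold ipsTerm
  fun_prop

theorem integral_ipsTerm_fiber {m : Measure (Fin K × ℝ)} {x : X} (hp0 : ∀ a, 0 < p0 x a)
    (hsnd : Integrable Prod.snd m) (hmean : ∀ a, ∫ p in {p | p.1 = a}, p.2 ∂m = p0 x a * c x a) :
    ∫ p, ipsTerm p0 pl α (x, p) ∂m = ∑ a, pl x a * (c x a * p0 x a ^ (1 - α)) :=
  calc ∫ p, ipsTerm p0 pl α (x, p) ∂m = ∫ p, p.2 * (pl x p.1 / p0 x p.1 ^ α) ∂m := by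
        simp only [ipsTerm, mul_div_assoc]
    _ = ∑ a, p0 x a * c x a * (pl x a / p0 x a ^ α) := by
        rw [integral_mul_comp_fst_eq_sum hsnd fun a => pl x a / p0 x a ^ α]
        simp only [hmean]
    _ = ∑ a, pl x a * (c x a * p0 x a ^ (1 - α)) := Finset.sum_congr rfl fun a _ => by
        rw [mul_comm (p0 x a), mul_assoc, mul_div_rpow_eq_mul_rpow_one_sub (hp0 a)]; ring

theorem integrable_ipsTerm_compProd [MeasurableSpace X] {ν : Measure X} [IsFiniteMeasure ν]
    {κ : Kernel X (Fin K × ℝ)} [IsMarkovKernel κ] (hp0 : ∀ a, Measurable fun x => p0 x a)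
    (hpl : ∀ a, Measurable fun x => pl x a) (hp0pos : ∀ x a, 0 < p0 x a)
    (hplnn : ∀ x a, 0 ≤ pl x a) (hsupp : ∀ x, ∀ᵐ p ∂(κ x), p.2 ∈ Set.Icc (-1 : ℝ) 0)
    (hmean : ∀ x a, ∫ p in {p : Fin K × ℝ | p.1 = a}, p.2 ∂(κ x) = p0 x a * c x a)
    (hint : Integrable (fun x => ∑ a, pl x a * (c x a * p0 x a ^ (1 - α))) ν) :
    Integrable (ipsTerm p0 pl α) (ν ⊗ₘ κ) := by
  have hsnd : ∀ x, Integrable Prod.snd (κ x) := fun x => integrable_snd_of_ae_mem_Icc (hsupp x)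
  refine integrable_compProd_of_ae_nonpos (measurable_ipsTerm hp0 hpl).aestronglyMeasurable
    (ae_of_all _ fun x => ?_) (ae_of_all _ fun x => ?_) ?_
  · simpa only [ipsTerm, mul_div_assoc] using (hsnd x).mul_comp_fst fun a => pl x a / p0 x a ^ α
  · filter_upwards [hsupp x] with p hp
    exact div_nonpos_of_nonpos_of_nonneg (mul_nonpos_of_nonpos_of_nonneg hp.2 (hplnn x p.1))
      (rpow_nonneg (hp0pos x p.1).le α)
  · simpa only [integral_ipsTerm_fiber (hp0pos _) (hsnd _) (hmean _)] using hint

end IPS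

theorem ips_alpha_bias_bound_general
    {X : Type*} [MeasurableSpace X] {K : ℕ}
    (ν : Measure X) [IsProbabilityMeasure ν]
    (p0 pl c : X → Fin K → ℝ)
    (hp0meas : ∀ a, Measurable fun x => p0 x a)
    (hplmeas : ∀ a, Measurable fun x => pl x a)
    (hcmeas : ∀ a, Measurable fun x => c x a)
    (hp0pos : ∀ x a, 0 < p0 x a) (hp0sum : ∀ x, ∑ a, p0 x a = 1)
    (hplnn : ∀ x a, 0 ≤ pl x a) (hplsum : ∀ x, ∑ a, pl x a = 1)
    (hc : ∀ x a, c x a ∈ Set.Icc (-1 : ℝ) 0)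
    (κ : Kernel X (Fin K × ℝ)) [IsMarkovKernel κ]
    (hκsupp : ∀ x, ∀ᵐ p ∂(κ x), p.2 ∈ Set.Icc (-1 : ℝ) 0)
    (hκmean : ∀ x a, ∫ p in {p : Fin K × ℝ | p.1 = a}, p.2 ∂(κ x) = p0 x a * c x a)
    (n : ℕ) (hn : 0 < n) (α : ℝ) (hα : α ∈ Set.Icc (0 : ℝ) 1) :
    |(∫ ω : Fin n → X × Fin K × ℝ,
          (n : ℝ)⁻¹ * ∑ i, (ω i).2.2 * pl (ω i).1 (ω i).2.1 / p0 (ω i).1 (ω i).2.1 ^ α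
          ∂(Measure.pi fun _ => ν ⊗ₘ κ))
        - ∫ x, ∑ a, pl x a * c x a ∂ν|
      ≤ ∫ x, ∑ a, pl x a * (1 - p0 x a ^ (1 - α)) ∂ν := by
  have hr0 : ∀ x a, 0 ≤ p0 x a ^ (1 - α) := fun x a => rpow_nonneg (hp0pos x a).le _
  have hp0le : ∀ x a, p0 x a ≤ 1 := fun x a =>
    hp0sum x ▸ Finset.single_le_sum (fun b _ => (hp0pos x b).le) (Finset.mem_univ a)
  have hr1 : ∀ x a, p0 x a ^ (1 - α) ≤ 1 := fun x a =>
    rpow_le_one (hp0pos x a).le (hp0le x a) (sub_nonneg.2 hα.2)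
  have hc1 : ∀ x a, |c x a| ≤ 1 := fun x a => abs_le.2 ⟨(hc x a).1, (hc x a).2.trans zero_le_one⟩
  have hestInt := integrable_sum_mul_of_abs_le_one (ν := ν)
    (v := fun x a => c x a * p0 x a ^ (1 - α)) hplmeas
    (fun a => (hcmeas a).mul ((hp0meas a).pow_const _)) hplnn hplsum fun x a => by
      rw [abs_mul, abs_of_nonneg (hr0 x a)]; exact mul_le_one₀ (hc1 x a) (hr0 x a) (hr1 x a)
  have hriskInt := integrable_sum_mul_of_abs_le_one (ν := ν) hplmeas hcmeas hplnn hplsum hc1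
  have hgapInt := integrable_sum_mul_of_abs_le_one (ν := ν) (v := fun x a => 1 - p0 x a ^ (1 - α))
    hplmeas (fun a => measurable_const.sub ((hp0meas a).pow_const _)) hplnn hplsum
    fun x a => abs_le.2 ⟨by linarith [hr1 x a], by linarith [hr0 x a]⟩
  have hg := integrable_ipsTerm_compProd hp0meas hplmeas hp0pos hplnn hκsupp hκmean hestInt
  rw [integral_sampleMean_pi hg hn.ne', Measure.integral_compProd hg,
    integral_congr_ae (ae_of_all _ fun x => integral_ipsTerm_fiber (hp0pos x)
      (integrable_snd_of_ae_mem_Icc (hκsupp x)) (hκmean x)), ← integral_sub hestInt hriskInt]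
  calc _ ≤ ∫ x, |∑ a, pl x a * (c x a * p0 x a ^ (1 - α)) - ∑ a, pl x a * c x a| ∂ν :=
        abs_integral_le_integral_abs
    _ ≤ _ := integral_mono (hestInt.sub hriskInt).abs hgapInt fun x =>
        abs_sum_mul_sub_sum_mul_le (hplnn x) (hc1 x) (hr1 x)

/-- **Bias of the IPS-α estimator.**  Off-policy contextual bandit setting with finite action
set `Fin K`, context distribution `ν`, logging policy `p0`, expected-cost function `c` taking
values in `[-1, 0]`, and a Markov kernel `κ` describing the joint distribution of the taken
action and the observed stochastic cost given a context (action marginal `p0`, cost supported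
in `[-1, 0]` with conditional mean `c`).  The logged data consists of `n` i.i.d. draws from
`ν ⊗ₘ κ`.  For `α ∈ [0,1]`, the bias of the IPS-α estimator of the risk of a policy `pl`
satisfies `|B(R̂ₙ^α(pl))| ≤ E_{x∼ν, a∼pl(·|x)}[1 − p0(a|x)^(1−α)]`. -/
theorem ips_alpha_bias_bound
    {X : Type*} [MeasurableSpace X] {K : ℕ}
    (ν : Measure X) [IsProbabilityMeasure ν]
    (p0 pl c : X → Fin K → ℝ)
    (hp0meas : ∀ a, Measurable fun x => p0 x a)
    (hplmeas : ∀ a, Measurable fun x => pl x a)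
    (hcmeas : ∀ a, Measurable fun x => c x a)
    (hp0pos : ∀ x a, 0 < p0 x a) (hp0sum : ∀ x, ∑ a, p0 x a = 1)
    (hplnn : ∀ x a, 0 ≤ pl x a) (hplsum : ∀ x, ∑ a, pl x a = 1)
    (hc : ∀ x a, c x a ∈ Set.Icc (-1 : ℝ) 0)
    (κ : Kernel X (Fin K × ℝ)) [IsMarkovKernel κ]
    (hκact : ∀ x a, κ x {p | p.1 = a} = ENNReal.ofReal (p0 x a))
    (hκsupp : ∀ x, ∀ᵐ p ∂(κ x), p.2 ∈ Set.Icc (-1 : ℝ) 0)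
    (hκmean : ∀ x a, ∫ p in {p : Fin K × ℝ | p.1 = a}, p.2 ∂(κ x) = p0 x a * c x a)
    (n : ℕ) (hn : 0 < n) (α : ℝ) (hα : α ∈ Set.Icc (0 : ℝ) 1) :
    |(∫ ω : Fin n → X × Fin K × ℝ,
          (n : ℝ)⁻¹ * ∑ i, (ω i).2.2 * pl (ω i).1 (ω i).2.1 / p0 (ω i).1 (ω i).2.1 ^ α
          ∂(Measure.pi fun _ => ν ⊗ₘ κ))
        - ∫ x, ∑ a, pl x a * c x a ∂ν|
      ≤ ∫ x, ∑ a, pl x a * (1 - p0 x a ^ (1 - α)) ∂ν :=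
  ips_alpha_bias_bound_general ν p0 pl c hp0meas hplmeas hcmeas hp0pos hp0sum hplnn hplsum hc κ
    hκsupp hκmean n hn α hα
end

section
/- Let α ∈ [0,1]. For every policy π, the variance of the IPS-α estimator satisfies V[R̂_n^α(π)] ≤ (1/n) E_{x∼ν, a∼π(·|x)}[π(a|x)/π0(a|x)^{2α−1}]. -/
/-!
The IPS-α estimate is the sample mean of `n` i.i.d. copies of `g(x, a, r) = r π(a|x) / π₀(a|x)^α`,
so its variance is `Var[g] / n ≤ E[g²] / n`. Since `|r| ≤ 1` and the logged action has law
`π₀(·|x)`, `E[g² | x] ≤ ∑ₐ π₀(a|x) (π(a|x) / π₀(a|x)^α)² = ∑ₐ π(a|x)² / π₀(a|x)^(2α-1)`.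
-/

open MeasureTheory ProbabilityTheory Real
open scoped ENNReal

lemma variance_sampleMean {Ω : Type*} [MeasurableSpace Ω] (μ : Measure Ω)
    [IsProbabilityMeasure μ] {g : Ω → ℝ} (hg : MemLp g 2 μ) (n : ℕ) :
    Var[fun ω : Fin n → Ω => (n : ℝ)⁻¹ * ∑ i, g (ω i); Measure.pi fun _ => μ]
      = (n : ℝ)⁻¹ * Var[g; μ] := by
  have hsum := variance_sum_pi (μ := fun _ : Fin n => μ) (X := fun _ => g) fun _ => hg
  simp only [Finset.sum_const, Finset.card_univ, Fintype.card_fin, nsmul_eq_mul] at hsum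
  rw [variance_const_mul, ← Finset.sum_fn, hsum]
  rcases eq_or_ne (n : ℝ) 0 with hn | hn
  · simp [hn]
  · field_simp

lemma integral_le_of_lintegral_ofReal_le {Ω : Type*} [MeasurableSpace Ω] {μ : Measure Ω}
    {f : Ω → ℝ} {C : ℝ} (hf₀ : 0 ≤ᵐ[μ] f) (hf : AEStronglyMeasurable f μ) (hC : 0 ≤ C)
    (h : ∫⁻ ω, ENNReal.ofReal (f ω) ∂μ ≤ ENNReal.ofReal C) : ∫ ω, f ω ∂μ ≤ C := by
  rw [integral_eq_lintegral_of_nonneg_ae hf₀ hf]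
  exact ENNReal.toReal_le_of_le_ofReal hC h

lemma sq_div_rpow_mul_self {q : ℝ} (hq : 0 < q) (r α : ℝ) :
    (r / q ^ α) ^ 2 * q = r * (r / q ^ (2 * α - 1)) := by
  rw [rpow_sub hq, rpow_one, mul_comm 2 α, rpow_mul hq.le, rpow_two]
  field_simp

lemma mul_div_rpow_self_nonneg (r : ℝ) {q : ℝ} (hq : 0 ≤ q) (β : ℝ) : 0 ≤ r * (r / q ^ β) := by
  rw [← mul_div_assoc]
  exact div_nonneg (mul_self_nonneg r) (rpow_nonneg hq β)

section ActionMarginal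

variable {A Y : Type*} [Fintype A] [MeasurableSpace A] [MeasurableSingletonClass A]
  [MeasurableSpace Y]

lemma lintegral_comp_fst_eq_sum (μ : Measure (A × Y)) (f : A → ℝ≥0∞) :
    ∫⁻ p, f p.1 ∂μ = ∑ a, f a * μ {p | p.1 = a} := by
  rw [← lintegral_map (measurable_of_finite f) measurable_fst, lintegral_fintype]
  simp_rw [Measure.map_apply measurable_fst (measurableSet_singleton _)]
  rfl

lemma lintegral_sq_mul_le_of_abs_le_one (μ : Measure (A × ℝ)) (w : A → ℝ)
    (hμ : ∀ᵐ p ∂μ, |p.2| ≤ 1) :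
    ∫⁻ p, ENNReal.ofReal ((p.2 * w p.1) ^ 2) ∂μ
      ≤ ∑ a, ENNReal.ofReal (w a ^ 2) * μ {p | p.1 = a} := by
  calc ∫⁻ p, ENNReal.ofReal ((p.2 * w p.1) ^ 2) ∂μ
      ≤ ∫⁻ p, ENNReal.ofReal (w p.1 ^ 2) ∂μ := by
        refine lintegral_mono_ae (hμ.mono fun p hp => ENNReal.ofReal_le_ofReal ?_)
        rw [mul_pow]
        exact mul_le_of_le_one_left (sq_nonneg _) (sq_le_one_iff_abs_le_one _ |>.mpr hp)
    _ = _ := lintegral_comp_fst_eq_sum μ fun a => ENNReal.ofReal (w a ^ 2)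

variable {X : Type*} [MeasurableSpace X]
  (ν : Measure X) [SFinite ν] (κ : Kernel X (A × ℝ)) [IsSFiniteKernel κ]

lemma measurable_snd_mul_weight {w : X → A → ℝ} (hw : ∀ a, Measurable fun x => w x a) :
    Measurable fun ω : X × A × ℝ => ω.2.2 * w ω.1 ω.2.1 :=
  measurable_snd.snd.mul <| (measurable_from_prod_countable_left (f := Function.uncurry w) hw).comp
    (measurable_fst.prodMk measurable_snd.fst)

lemma lintegral_compProd_sq_mul_le (w : X → A → ℝ) (hw : ∀ a, Measurable fun x => w x a)
    (hκ : ∀ x, ∀ᵐ p ∂κ x, |p.2| ≤ 1) :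
    ∫⁻ ω, ENNReal.ofReal ((ω.2.2 * w ω.1 ω.2.1) ^ 2) ∂(ν ⊗ₘ κ)
      ≤ ∫⁻ x, ∑ a, ENNReal.ofReal (w x a ^ 2) * κ x {p | p.1 = a} ∂ν := by
  rw [Measure.lintegral_compProd ((measurable_snd_mul_weight hw).pow_const 2).ennreal_ofReal]
  exact lintegral_mono fun x => lintegral_sq_mul_le_of_abs_le_one (κ x) (w x) (hκ x)

variable {p0 pl : X → A → ℝ} {α : ℝ}

lemma lintegral_sq_ips_le (hp0meas : ∀ a, Measurable fun x => p0 x a)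
    (hplmeas : ∀ a, Measurable fun x => pl x a) (hp0pos : ∀ x a, 0 < p0 x a)
    (hκact : ∀ x a, κ x {p | p.1 = a} = ENNReal.ofReal (p0 x a))
    (hκ : ∀ x, ∀ᵐ p ∂κ x, |p.2| ≤ 1)
    (hInt : Integrable (fun x => ∑ a, pl x a * (pl x a / p0 x a ^ (2 * α - 1))) ν) :
    ∫⁻ ω, ENNReal.ofReal ((ω.2.2 * pl ω.1 ω.2.1 / p0 ω.1 ω.2.1 ^ α) ^ 2) ∂(ν ⊗ₘ κ)
      ≤ ENNReal.ofReal (∫ x, ∑ a, pl x a * (pl x a / p0 x a ^ (2 * α - 1)) ∂ν) := by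
  set w : X → A → ℝ := fun x a => pl x a / p0 x a ^ α
  have hw : ∀ a, Measurable fun x => w x a := fun a => (hplmeas a).div ((hp0meas a).pow_const α)
  have hterm : ∀ x a, ENNReal.ofReal (w x a ^ 2) * κ x {p | p.1 = a}
      = ENNReal.ofReal (pl x a * (pl x a / p0 x a ^ (2 * α - 1))) := fun x a => by
    rw [hκact, ← ENNReal.ofReal_mul (sq_nonneg _), sq_div_rpow_mul_self (hp0pos x a)]
  calc ∫⁻ ω, ENNReal.ofReal ((ω.2.2 * pl ω.1 ω.2.1 / p0 ω.1 ω.2.1 ^ α) ^ 2) ∂(ν ⊗ₘ κ)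
      = ∫⁻ ω, ENNReal.ofReal ((ω.2.2 * w ω.1 ω.2.1) ^ 2) ∂(ν ⊗ₘ κ) := by
        simp_rw [w, mul_div_assoc]
    _ ≤ ∫⁻ x, ∑ a, ENNReal.ofReal (w x a ^ 2) * κ x {p | p.1 = a} ∂ν :=
        lintegral_compProd_sq_mul_le ν κ w hw hκ
    _ = ∫⁻ x, ENNReal.ofReal (∑ a, pl x a * (pl x a / p0 x a ^ (2 * α - 1))) ∂ν := by
        refine lintegral_congr fun x => ?_
        simp_rw [hterm]
        exact (ENNReal.ofReal_sum_of_nonneg fun a _ =>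
          mul_div_rpow_self_nonneg _ (hp0pos x a).le _).symm
    _ = _ := (ofReal_integral_eq_lintegral_ofReal hInt <| ae_of_all _ fun x =>
        Finset.sum_nonneg fun a _ => mul_div_rpow_self_nonneg _ (hp0pos x a).le _).symm

end ActionMarginal

/-- `κ x` is the joint law of the logged action and its observed cost in context `x`, so a
logged sample is a draw from `ν ⊗ₘ κ`; `p0` is the logging policy and `pl` the evaluated one. -/
theorem ips_alpha_variance_bound_general
    {X : Type*} [MeasurableSpace X] {K : ℕ}
    (ν : Measure X) [IsProbabilityMeasure ν]
    (p0 pl : X → Fin K → ℝ)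
    (hp0meas : ∀ a, Measurable fun x => p0 x a)
    (hplmeas : ∀ a, Measurable fun x => pl x a)
    (hp0pos : ∀ x a, 0 < p0 x a)
    (κ : Kernel X (Fin K × ℝ)) [IsMarkovKernel κ]
    (hκact : ∀ x a, κ x {p | p.1 = a} = ENNReal.ofReal (p0 x a))
    (hκsupp : ∀ x, ∀ᵐ p ∂(κ x), p.2 ∈ Set.Icc (-1 : ℝ) 0)
    (n : ℕ) (α : ℝ)
    (hInt : Integrable (fun x => ∑ a, pl x a * (pl x a / p0 x a ^ (2 * α - 1))) ν) :
    (∫ ω : Fin n → X × Fin K × ℝ,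
        ((n : ℝ)⁻¹ * ∑ i, (ω i).2.2 * pl (ω i).1 (ω i).2.1 / p0 (ω i).1 (ω i).2.1 ^ α
          - ∫ ω' : Fin n → X × Fin K × ℝ,
              (n : ℝ)⁻¹ * ∑ i, (ω' i).2.2 * pl (ω' i).1 (ω' i).2.1 / p0 (ω' i).1 (ω' i).2.1 ^ α
              ∂(Measure.pi fun _ => ν ⊗ₘ κ)) ^ 2
        ∂(Measure.pi fun _ => ν ⊗ₘ κ))
      ≤ (n : ℝ)⁻¹ * ∫ x, ∑ a, pl x a * (pl x a / p0 x a ^ (2 * α - 1)) ∂ν := by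
  set g : X × Fin K × ℝ → ℝ := fun ω => ω.2.2 * pl ω.1 ω.2.1 / p0 ω.1 ω.2.1 ^ α
  have hg_meas : Measurable g := by
    convert measurable_snd_mul_weight (w := fun x a => pl x a / p0 x a ^ α)
      fun a => (hplmeas a).div ((hp0meas a).pow_const α) using 2
    exact mul_div_assoc _ _ _
  have hg_aesm : AEStronglyMeasurable g (ν ⊗ₘ κ) := hg_meas.aestronglyMeasurable
  have hmoment := lintegral_sq_ips_le ν κ hp0meas hplmeas hp0pos hκact
    (fun x => (hκsupp x).mono fun p hp => abs_le.2 ⟨hp.1, hp.2.trans zero_le_one⟩) hInt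
  have hsq_nonneg : 0 ≤ᵐ[ν ⊗ₘ κ] fun ω => g ω ^ 2 := ae_of_all _ fun ω => sq_nonneg _
  have hg : MemLp g 2 (ν ⊗ₘ κ) := (memLp_two_iff_integrable_sq hg_aesm).2
    ⟨hg_aesm.pow 2, (hasFiniteIntegral_iff_ofReal hsq_nonneg).2
      (hmoment.trans_lt ENNReal.ofReal_lt_top)⟩
  have hmean_meas : Measurable fun ω : Fin n → X × Fin K × ℝ => (n : ℝ)⁻¹ * ∑ i, g (ω i) :=
    (Finset.measurable_sum _ fun i _ => hg_meas.comp (measurable_pi_apply i)).const_mul _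
  rw [← variance_eq_integral hmean_meas.aemeasurable, variance_sampleMean _ hg]
  gcongr
  calc Var[g; ν ⊗ₘ κ] ≤ ∫ ω, g ω ^ 2 ∂(ν ⊗ₘ κ) := variance_le_expectation_sq hg_aesm
    _ ≤ _ := integral_le_of_lintegral_ofReal_le hsq_nonneg (hg_aesm.pow 2)
        (integral_nonneg fun x => Finset.sum_nonneg fun a _ =>
          mul_div_rpow_self_nonneg _ (hp0pos x a).le _) hmoment

/-- **Variance of the IPS-α estimator.**  Off-policy contextual bandit setting with finite
action set `Fin K`, context distribution `ν`, logging policy `p0`, expected-cost function `c`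
taking values in `[-1, 0]`, and a Markov kernel `κ` describing the joint distribution of the
taken action and the observed stochastic cost given a context (action marginal `p0`, cost
supported in `[-1, 0]` with conditional mean `c`).  The logged data consists of `n` i.i.d.
draws from `ν ⊗ₘ κ`.  For `α ∈ [0,1]`, the variance of the IPS-α estimator of the risk of a
policy `pl` satisfies `V[R̂ₙ^α(pl)] ≤ (1/n) E_{x∼ν, a∼pl(·|x)}[pl(a|x)/p0(a|x)^(2α−1)]`. -/
theorem ips_alpha_variance_bound
    {X : Type*} [MeasurableSpace X] {K : ℕ}
    (ν : Measure X) [IsProbabilityMeasure ν]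
    (p0 pl c : X → Fin K → ℝ)
    (hp0meas : ∀ a, Measurable fun x => p0 x a)
    (hplmeas : ∀ a, Measurable fun x => pl x a)
    (hcmeas : ∀ a, Measurable fun x => c x a)
    (hp0pos : ∀ x a, 0 < p0 x a) (hp0sum : ∀ x, ∑ a, p0 x a = 1)
    (hplnn : ∀ x a, 0 ≤ pl x a) (hplsum : ∀ x, ∑ a, pl x a = 1)
    (hc : ∀ x a, c x a ∈ Set.Icc (-1 : ℝ) 0)
    (κ : Kernel X (Fin K × ℝ)) [IsMarkovKernel κ]
    (hκact : ∀ x a, κ x {p | p.1 = a} = ENNReal.ofReal (p0 x a))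
    (hκsupp : ∀ x, ∀ᵐ p ∂(κ x), p.2 ∈ Set.Icc (-1 : ℝ) 0)
    (hκmean : ∀ x a, ∫ p in {p : Fin K × ℝ | p.1 = a}, p.2 ∂(κ x) = p0 x a * c x a)
    (n : ℕ) (hn : 0 < n) (α : ℝ) (hα : α ∈ Set.Icc (0 : ℝ) 1)
    (hInt : Integrable (fun x => ∑ a, pl x a * (pl x a / p0 x a ^ (2 * α - 1))) ν) :
    (∫ ω : Fin n → X × Fin K × ℝ,
        ((n : ℝ)⁻¹ * ∑ i, (ω i).2.2 * pl (ω i).1 (ω i).2.1 / p0 (ω i).1 (ω i).2.1 ^ α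
          - ∫ ω' : Fin n → X × Fin K × ℝ,
              (n : ℝ)⁻¹ * ∑ i, (ω' i).2.2 * pl (ω' i).1 (ω' i).2.1 / p0 (ω' i).1 (ω' i).2.1 ^ α
              ∂(Measure.pi fun _ => ν ⊗ₘ κ)) ^ 2
        ∂(Measure.pi fun _ => ν ⊗ₘ κ))
      ≤ (n : ℝ)⁻¹ * ∫ x, ∑ a, pl x a * (pl x a / p0 x a ^ (2 * α - 1)) ∂ν :=
  ips_alpha_variance_bound_general ν p0 pl hp0meas hplmeas hp0pos κ hκact hκsupp n α hInt
end

section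
/- Let β ∈ [0,1]. For every policy π, the bias of the IPS-β estimator satisfies |B(R̃_n^β(π))| ≤ E_{x∼ν, a∼π(·|x)}[ |(π0(a|x)/π(a|x))^{1−β} − 1| ] (the expectation over a ∼ π(·|x) only involves actions with π(a|x) > 0). -/
/-!
Averaging over the i.i.d. sample and conditioning on the context, the expected estimator is
`E_x ∑_a w_a c(x,a)` with `w_a = (π_a/π0_a)^β π0_a = π_a^β π0_a^(1-β)`, so the bias is
`E_x ∑_a (w_a - π_a) c(x,a)`. Weighted AM-GM gives `∑_a w_a ≤ 1 = ∑_a π_a`, and for `π_a > 0`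
one has `|w_a - π_a| = π_a |(π0_a/π_a)^(1-β) - 1|`. As costs lie in `[-1, 0]`, neither the
actions with `π_a = 0` (where `w_a ≥ 0`) nor the missing mass `1 - ∑_a w_a` can increase the
bias: bound `(w_a - π_a) c` from above directly, and `(π_a - w_a) c` after shifting the cost
to `c + 1 ∈ [0, 1]`.
-/

open MeasureTheory ProbabilityTheory Real

lemma integral_pi_sum_comp_eval {ι α : Type*} [Fintype ι] [MeasurableSpace α] {μ : Measure α}
    [IsProbabilityMeasure μ] {f : α → ℝ} (hf : Integrable f μ) :
    ∫ ω : ι → α, ∑ i, f (ω i) ∂(Measure.pi fun _ => μ) = Fintype.card ι * ∫ x, f x ∂μ := by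
  rw [integral_finsetSum _ fun i _ => integrable_comp_eval hf]
  simp [integral_comp_eval (μ := fun _ => μ) hf.aestronglyMeasurable]

section Fibres

variable {ι Y : Type*}

lemma measurableSet_fst_eq [MeasurableSpace ι] [MeasurableSingletonClass ι] [MeasurableSpace Y]
    (a : ι) : MeasurableSet {p : ι × Y | p.1 = a} :=
  measurable_fst (measurableSet_singleton a)

lemma mul_comp_fst_eq_sum_indicator [Fintype ι] (G : ι × Y → ℝ) (h : ι → ℝ) :
    (fun p => G p * h p.1) = fun p => ∑ a, h a * {p : ι × Y | p.1 = a}.indicator G p := by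
  classical
  ext p
  simp [Set.indicator_apply, mul_comm]

variable [Fintype ι] [MeasurableSpace ι] [MeasurableSingletonClass ι] [MeasurableSpace Y]
  {μ : Measure (ι × Y)} {G : ι × Y → ℝ}

lemma MeasureTheory.Integrable.mul_comp_fst_s2 (hG : Integrable G μ) (h : ι → ℝ) :
    Integrable (fun p => G p * h p.1) μ := by
  rw [mul_comp_fst_eq_sum_indicator]
  exact integrable_finsetSum _ fun a _ => (hG.indicator (measurableSet_fst_eq a)).const_mul _

lemma integral_mul_comp_fst (hG : Integrable G μ) (h : ι → ℝ) :
    ∫ p, G p * h p.1 ∂μ = ∑ a, h a * ∫ p in {p | p.1 = a}, G p ∂μ := by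
  rw [mul_comp_fst_eq_sum_indicator,
    integral_finsetSum _ fun a _ => (hG.indicator (measurableSet_fst_eq a)).const_mul _]
  simp only [integral_const_mul, integral_indicator (measurableSet_fst_eq _)]

lemma integral_comp_fst [IsFiniteMeasure μ] (h : ι → ℝ) :
    ∫ p, h p.1 ∂μ = ∑ a, h a * μ.real {p | p.1 = a} := by
  simpa using integral_mul_comp_fst (integrable_const (1 : ℝ) (μ := μ)) h

end Fibres

section CompProd

variable {X ι : Type*} [MeasurableSpace X] [Fintype ι] [MeasurableSpace ι]
  [MeasurableSingletonClass ι] {κ : Kernel X (ι × ℝ)} {w : X → ι → ℝ}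

lemma integrable_compProd_snd_mul [IsFiniteKernel κ] (ν : Measure X) [IsFiniteMeasure ν]
    (hw : Measurable fun q : X × ι => w q.1 q.2) (hw0 : ∀ x a, 0 ≤ w x a)
    (hκ : ∀ x, ∀ᵐ p ∂(κ x), ‖p.2‖ ≤ 1) {C : ℝ}
    (hC : ∀ x, ∑ a, w x a * (κ x).real {p | p.1 = a} ≤ C) :
    Integrable (fun q : X × ι × ℝ => q.2.2 * w q.1 q.2.1) (ν ⊗ₘ κ) := by
  have hmeas : Measurable fun q : X × ι × ℝ => q.2.2 * w q.1 q.2.1 := by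
    fun_prop
  have hsnd : ∀ x, Integrable Prod.snd (κ x) := fun x =>
    .of_bound measurable_snd.aestronglyMeasurable 1 (hκ x)
  rw [Measure.integrable_compProd_iff hmeas.aestronglyMeasurable]
  refine ⟨ae_of_all _ fun x => (hsnd x).mul_comp_fst_s2 (w x), ?_⟩
  refine .of_bound (hmeas.norm.stronglyMeasurable.integral_kernel_prod_right').aestronglyMeasurable
    C (ae_of_all _ fun x => ?_)
  have hle : ∫ p, ‖p.2 * w x p.1‖ ∂(κ x) ≤ ∫ p, w x p.1 ∂(κ x) := by
    refine integral_mono_ae ((hsnd x).mul_comp_fst_s2 (w x)).norm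
      (((integrable_const (1 : ℝ)).mul_comp_fst_s2 (w x)).congr (ae_of_all _ fun p => one_mul _)) ?_
    filter_upwards [hκ x] with p hp
    rw [norm_mul, Real.norm_of_nonneg (hw0 x p.1)]
    exact mul_le_of_le_one_left (hw0 x p.1) hp
  rw [Real.norm_of_nonneg (integral_nonneg fun _ => norm_nonneg _)]
  exact (hle.trans_eq (integral_comp_fst _)).trans (hC x)

lemma integral_compProd_snd_mul [IsSFiniteKernel κ] {ν : Measure X} [SFinite ν]
    (hκ : ∀ x, Integrable Prod.snd (κ x)) (hf : Integrable (fun q : X × ι × ℝ => q.2.2 * w q.1 q.2.1) (ν ⊗ₘ κ)) :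
    ∫ q, q.2.2 * w q.1 q.2.1 ∂(ν ⊗ₘ κ)
      = ∫ x, ∑ a, w x a * ∫ p in {p | p.1 = a}, p.2 ∂(κ x) ∂ν := by
  rw [Measure.integral_compProd hf]
  exact integral_congr_ae (ae_of_all _ fun x => integral_mul_comp_fst (hκ x) (w x))

lemma integral_pi_average_snd_mul [IsMarkovKernel κ] (ν : Measure X) [IsProbabilityMeasure ν]
    {n : ℕ} (hn : 0 < n) (hw : Measurable fun q : X × ι => w q.1 q.2) (hw0 : ∀ x a, 0 ≤ w x a)
    (hκ : ∀ x, ∀ᵐ p ∂(κ x), ‖p.2‖ ≤ 1) {C : ℝ}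
    (hC : ∀ x, ∑ a, w x a * (κ x).real {p | p.1 = a} ≤ C) :
    ∫ ω : Fin n → X × ι × ℝ, (n : ℝ)⁻¹ * ∑ i, (ω i).2.2 * w (ω i).1 (ω i).2.1
        ∂(Measure.pi fun _ => ν ⊗ₘ κ)
      = ∫ x, ∑ a, w x a * ∫ p in {p | p.1 = a}, p.2 ∂(κ x) ∂ν := by
  have hf := integrable_compProd_snd_mul ν hw hw0 hκ hC
  rw [integral_const_mul, integral_pi_sum_comp_eval hf, Fintype.card_fin,
    inv_mul_cancel_left₀ (Nat.cast_pos.2 hn).ne',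
    integral_compProd_snd_mul (fun x => .of_bound measurable_snd.aestronglyMeasurable 1 (hκ x)) hf]

end CompProd

section Weights

variable {p q β : ℝ}

lemma div_rpow_mul_eq (hp : 0 < p) (hq : 0 ≤ q) : (q / p) ^ β * p = q ^ β * p ^ (1 - β) := by
  rw [div_rpow hq hp.le, rpow_sub hp, rpow_one]
  field_simp

lemma div_rpow_mul_le (hp : 0 < p) (hq : 0 ≤ q) (hβ0 : 0 ≤ β) (hβ1 : β ≤ 1) :
    (q / p) ^ β * p ≤ β * q + (1 - β) * p := by
  rw [div_rpow_mul_eq hp hq]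
  exact geom_mean_le_arith_mean2_weighted hβ0 (by linarith) hq hp.le (by ring)

lemma mul_abs_div_rpow_sub_one (hp : 0 < p) (hq : 0 < q) :
    q * |(p / q) ^ (1 - β) - 1| = |(q / p) ^ β * p - q| := by
  have hsplit : q * (p / q) ^ (1 - β) = (q / p) ^ β * p := by
    rw [div_rpow_mul_eq hp hq.le, div_rpow hp.le hq.le, rpow_sub hq, rpow_one]
    field_simp
  rw [← abs_of_pos hq, ← abs_mul, abs_of_pos hq, mul_sub, mul_one, hsplit]

end Weights

section Sums

variable {ι : Type*} [Fintype ι] {p q c : ι → ℝ} {β : ℝ}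

lemma sum_div_rpow_mul_le_one (hp : ∀ a, 0 < p a) (hp1 : ∑ a, p a = 1) (hq : ∀ a, 0 ≤ q a)
    (hq1 : ∑ a, q a = 1) (hβ0 : 0 ≤ β) (hβ1 : β ≤ 1) :
    ∑ a, (q a / p a) ^ β * p a ≤ 1 :=
  calc ∑ a, (q a / p a) ^ β * p a
      ≤ ∑ a, (β * q a + (1 - β) * p a) :=
        Finset.sum_le_sum fun a _ => div_rpow_mul_le (hp a) (hq a) hβ0 hβ1
    _ = 1 := by rw [Finset.sum_add_distrib, ← Finset.mul_sum, ← Finset.mul_sum, hq1, hp1]; ring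

lemma sum_mul_abs_div_rpow_sub_one_le_two (hp : ∀ a, 0 < p a) (hp1 : ∑ a, p a = 1)
    (hq : ∀ a, 0 ≤ q a) (hq1 : ∑ a, q a = 1) (hβ0 : 0 ≤ β) (hβ1 : β ≤ 1) :
    ∑ a, q a * |(p a / q a) ^ (1 - β) - 1| ≤ 2 := by
  have hterm : ∀ a, q a * |(p a / q a) ^ (1 - β) - 1| ≤ (q a / p a) ^ β * p a + q a := by
    intro a
    have hw : 0 ≤ (q a / p a) ^ β * p a :=
      mul_nonneg (rpow_nonneg (div_nonneg (hq a) (hp a).le) _) (hp a).le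
    rcases (hq a).eq_or_lt with hqa | hqa
    · rw [← hqa] at hw ⊢
      rw [zero_mul, add_zero]
      exact hw
    · rw [mul_abs_div_rpow_sub_one (hp a) hqa]
      exact (abs_sub _ _).trans_eq (by rw [abs_of_nonneg hw, abs_of_pos hqa])
  calc ∑ a, q a * |(p a / q a) ^ (1 - β) - 1|
      ≤ ∑ a, ((q a / p a) ^ β * p a + q a) := Finset.sum_le_sum fun a _ => hterm a
    _ ≤ 1 + 1 := by
        rw [Finset.sum_add_distrib, hq1]
        linarith [sum_div_rpow_mul_le_one hp hp1 hq hq1 hβ0 hβ1]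
    _ = 2 := by norm_num

lemma abs_sum_mul_le_sum (hp : ∀ a, 0 ≤ p a) (hc : ∀ a, |c a| ≤ 1) :
    |∑ a, p a * c a| ≤ ∑ a, p a :=
  (Finset.abs_sum_le_sum_abs _ _).trans <| Finset.sum_le_sum fun a _ => by
    rw [abs_mul, abs_of_nonneg (hp a)]
    exact mul_le_of_le_one_right (hp a) (hc a)

lemma abs_sum_div_rpow_mul_mul_le_one (hp : ∀ a, 0 < p a) (hp1 : ∑ a, p a = 1)
    (hq : ∀ a, 0 ≤ q a) (hq1 : ∑ a, q a = 1) (hc : ∀ a, |c a| ≤ 1) (hβ0 : 0 ≤ β) (hβ1 : β ≤ 1) :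
    |∑ a, (q a / p a) ^ β * (p a * c a)| ≤ 1 := by
  simpa only [mul_assoc] using (abs_sum_mul_le_sum
    (fun a => mul_nonneg (rpow_nonneg (div_nonneg (hq a) (hp a).le) β) (hp a).le) hc).trans
    (sum_div_rpow_mul_le_one hp hp1 hq hq1 hβ0 hβ1)

lemma abs_sum_sub_mul_le {w g : ι → ℝ} (hw : ∀ a, 0 ≤ w a) (hsum : ∑ a, w a ≤ ∑ a, p a)
    (hc : ∀ a, c a ∈ Set.Icc (-1 : ℝ) 0) (hg0 : ∀ a, 0 ≤ g a)
    (hg : ∀ a, p a ≠ 0 → |w a - p a| ≤ g a) :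
    |∑ a, (w a - p a) * c a| ≤ ∑ a, g a := by
  have upper : ∀ a, (w a - p a) * c a ≤ g a := by
    intro a
    obtain ⟨hc1, hc0⟩ := hc a
    by_cases hpa : p a = 0
    · rw [hpa, sub_zero]
      nlinarith [hw a, hg0 a]
    · have hga := hg a hpa
      nlinarith [abs_nonneg (w a - p a), le_abs_self (w a - p a), neg_abs_le (w a - p a)]
  have lower : ∀ a, (p a - w a) * (c a + 1) ≤ g a := by
    intro a
    obtain ⟨hc1, hc0⟩ := hc a
    by_cases hpa : p a = 0
    · rw [hpa, zero_sub]
      nlinarith [hw a, hg0 a]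
    · have hga := hg a hpa
      nlinarith [abs_nonneg (w a - p a), le_abs_self (w a - p a), neg_abs_le (w a - p a)]
  have hshift : ∑ a, (p a - w a) * (c a + 1)
      = -∑ a, (w a - p a) * c a + (∑ a, p a - ∑ a, w a) := by
    simp only [← Finset.sum_sub_distrib, ← Finset.sum_neg_distrib, ← Finset.sum_add_distrib]
    exact Finset.sum_congr rfl fun a _ => by ring
  rw [abs_le]
  constructor
  · linarith [Finset.sum_le_sum fun a (_ : a ∈ Finset.univ) => lower a]
  · exact Finset.sum_le_sum fun a _ => upper a

lemma abs_sum_ips_bias_le (hp : ∀ a, 0 < p a) (hp1 : ∑ a, p a = 1) (hq : ∀ a, 0 ≤ q a)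
    (hq1 : ∑ a, q a = 1) (hc : ∀ a, c a ∈ Set.Icc (-1 : ℝ) 0) (hβ0 : 0 ≤ β) (hβ1 : β ≤ 1) :
    |∑ a, (q a / p a) ^ β * (p a * c a) - ∑ a, q a * c a|
      ≤ ∑ a, q a * |(p a / q a) ^ (1 - β) - 1| := by
  have hdiff : ∑ a, (q a / p a) ^ β * (p a * c a) - ∑ a, q a * c a
      = ∑ a, ((q a / p a) ^ β * p a - q a) * c a := by
    rw [← Finset.sum_sub_distrib]
    exact Finset.sum_congr rfl fun a _ => by ring
  rw [hdiff]
  refine abs_sum_sub_mul_le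
    (fun a => mul_nonneg (rpow_nonneg (div_nonneg (hq a) (hp a).le) _) (hp a).le)
    (hq1 ▸ sum_div_rpow_mul_le_one hp hp1 hq hq1 hβ0 hβ1) hc
    (fun a => mul_nonneg (hq a) (abs_nonneg _)) fun a ha => ?_
  exact (mul_abs_div_rpow_sub_one (hp a) ((hq a).lt_of_ne' ha)).ge

end Sums

/-- **Bias of the IPS-β estimator.**  Off-policy contextual bandit setting with finite action
set `Fin K`, context distribution `ν`, logging policy `p0`, expected-cost function `c` taking
values in `[-1, 0]`, and a Markov kernel `κ` describing the joint distribution of the taken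
action and the observed stochastic cost given a context (action marginal `p0`, cost supported
in `[-1, 0]` with conditional mean `c`).  The logged data consists of `n` i.i.d. draws from
`ν ⊗ₘ κ`.  For `β ∈ [0,1]`, the bias of the IPS-β estimator of the risk of a policy `pl`
satisfies `|B(R̃ₙ^β(pl))| ≤ E_{x∼ν, a∼pl(·|x)}[|(p0(a|x)/pl(a|x))^(1−β) − 1|]` (the expectation
over `a ∼ pl(·|x)` weights each action by `pl(a|x)`, so only actions with `pl(a|x) > 0`
contribute). -/
theorem ips_beta_bias_bound
    {X : Type*} [MeasurableSpace X] {K : ℕ}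
    (ν : Measure X) [IsProbabilityMeasure ν]
    (p0 pl c : X → Fin K → ℝ)
    (hp0meas : ∀ a, Measurable fun x => p0 x a)
    (hplmeas : ∀ a, Measurable fun x => pl x a)
    (hcmeas : ∀ a, Measurable fun x => c x a)
    (hp0pos : ∀ x a, 0 < p0 x a) (hp0sum : ∀ x, ∑ a, p0 x a = 1)
    (hplnn : ∀ x a, 0 ≤ pl x a) (hplsum : ∀ x, ∑ a, pl x a = 1)
    (hc : ∀ x a, c x a ∈ Set.Icc (-1 : ℝ) 0)
    (κ : Kernel X (Fin K × ℝ)) [IsMarkovKernel κ]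
    (hκact : ∀ x a, κ x {p | p.1 = a} = ENNReal.ofReal (p0 x a))
    (hκsupp : ∀ x, ∀ᵐ p ∂(κ x), p.2 ∈ Set.Icc (-1 : ℝ) 0)
    (hκmean : ∀ x a, ∫ p in {p : Fin K × ℝ | p.1 = a}, p.2 ∂(κ x) = p0 x a * c x a)
    (n : ℕ) (hn : 0 < n) (β : ℝ) (hβ : β ∈ Set.Icc (0 : ℝ) 1) :
    |(∫ ω : Fin n → X × Fin K × ℝ,
          (n : ℝ)⁻¹ * ∑ i, (ω i).2.2 * (pl (ω i).1 (ω i).2.1 / p0 (ω i).1 (ω i).2.1) ^ β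
          ∂(Measure.pi fun _ => ν ⊗ₘ κ))
        - ∫ x, ∑ a, pl x a * c x a ∂ν|
      ≤ ∫ x, ∑ a, pl x a * |(p0 x a / pl x a) ^ (1 - β) - 1| ∂ν := by
  obtain ⟨hβ0, hβ1⟩ := hβ
  have hw_meas : Measurable fun q : X × Fin K => (pl q.1 q.2 / p0 q.1 q.2) ^ β :=
    measurable_from_prod_countable_left fun a => (hplmeas a).div (hp0meas a) |>.pow_const β
  have hcost : ∀ x, ∀ᵐ p ∂(κ x), ‖p.2‖ ≤ 1 := fun x =>
    (hκsupp x).mono fun p hp => abs_le.2 ⟨hp.1, hp.2.trans zero_le_one⟩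
  have hmass : ∀ x a, (κ x).real {p | p.1 = a} = p0 x a := fun x a => by
    rw [measureReal_def, hκact, ENNReal.toReal_ofReal (hp0pos x a).le]
  rw [integral_pi_average_snd_mul ν hn hw_meas
    (fun x a => rpow_nonneg (div_nonneg (hplnn x a) (hp0pos x a).le) β) hcost (C := 1)
    fun x => by simpa only [hmass] using
      sum_div_rpow_mul_le_one (hp0pos x) (hp0sum x) (hplnn x) (hplsum x) hβ0 hβ1]
  simp only [hκmean]
  have hcabs : ∀ x a, |c x a| ≤ 1 := fun x a => abs_le.2 ⟨(hc x a).1, (hc x a).2.trans zero_le_one⟩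
  have hestimate : Integrable (fun x => ∑ a, (pl x a / p0 x a) ^ β * (p0 x a * c x a)) ν :=
    .of_bound (by fun_prop) 1 (ae_of_all _ fun x => abs_sum_div_rpow_mul_mul_le_one
      (hp0pos x) (hp0sum x) (hplnn x) (hplsum x) (hcabs x) hβ0 hβ1)
  have hrisk : Integrable (fun x => ∑ a, pl x a * c x a) ν :=
    .of_bound (by fun_prop) 1 (ae_of_all _ fun x =>
      (abs_sum_mul_le_sum (hplnn x) (hcabs x)).trans_eq (hplsum x))
  have hbound : Integrable (fun x => ∑ a, pl x a * |(p0 x a / pl x a) ^ (1 - β) - 1|) ν := by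
    refine .of_bound (by fun_prop) 2 (ae_of_all _ fun x => ?_)
    rw [Real.norm_of_nonneg (Finset.sum_nonneg fun a _ => mul_nonneg (hplnn x a) (abs_nonneg _))]
    exact sum_mul_abs_div_rpow_sub_one_le_two (hp0pos x) (hp0sum x) (hplnn x) (hplsum x) hβ0 hβ1
  rw [← integral_sub hestimate hrisk]
  refine norm_integral_le_of_norm_le (G := ℝ) hbound (ae_of_all _ fun x => ?_)
  exact abs_sum_ips_bias_le (hp0pos x) (hp0sum x) (hplnn x) (hplsum x) (hc x) hβ0 hβ1
end

section
/- (Posterior-averaged second-moment bound) Fix contexts x_1,…,x_n ∈ X, actions a_1,…,a_n ∈ A, and α ∈ [0,1]. For h ∈ H and i ∈ {1,…,n} define f_i(a', h) = E_{a∼π0(·|x_i)}[ 1{h(x_i)=a}·c(x_i,a)/π0(a|x_i)^α ] − 1{h(x_i)=a'}·c(x_i,a')/π0(a'|x_i)^α. Then for every probability distribution Q on H: E_{h∼Q}[ Σ_{i=1}^n ( E_{a∼π0(·|x_i)}[f_i(a,h)²] + f_i(a_i,h)² ) ] ≤ Σ_{i=1}^n ( E_{a∼π0(·|x_i)}[ π_Q(a|x_i)·c(x_i,a)²/π0(a|x_i)^{2α}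 ] + π_Q(a_i|x_i)·c(x_i,a_i)²/π0(a_i|x_i)^{2α} ). -/
/-!
Fix a round `i` and write `w a = c a / π₀(a)^α`. For a single hypothesis `h` choosing `b`, the
importance-weighted cost `g a = 1{b = a} w a` has mean `m = π₀(b) w b`, so the conditional term is
a variance, `π₀(b) w b ² - m²`, and the empirical term is `m²` unless `a_i = b`. In both cases the
sum is at most `π₀(b) w b ² + 1{b = a_i} w b ²`. This bound depends on `h` only through `h(x_i)`,
so integrating it against `Q` replaces the indicators by `π_Q(· | x_i)`.
-/

open MeasureTheory ProbabilityTheory Real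

section CenteredSecondMoment

variable {ι : Type*} [Fintype ι] {p : ι → ℝ}

theorem sum_mul_sub_sq_eq (hp : ∑ a, p a = 1) (g : ι → ℝ) :
    ∑ a, p a * (∑ a', p a' * g a' - g a) ^ 2
      = ∑ a, p a * g a ^ 2 - (∑ a, p a * g a) ^ 2 := by
  set m := ∑ a', p a' * g a'
  have expand : ∀ a, p a * (m - g a) ^ 2 = m ^ 2 * p a - 2 * m * (p a * g a) + p a * g a ^ 2 :=
    fun a => by ring
  simp only [expand, Finset.sum_add_distrib, Finset.sum_sub_distrib, ← Finset.mul_sum, hp]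
  ring

def centeredSecondMoment (p g : ι → ℝ) (a₀ : ι) : ℝ :=
  ∑ a, p a * (∑ a', p a' * g a' - g a) ^ 2 + (∑ a', p a' * g a' - g a₀) ^ 2

variable [DecidableEq ι]

theorem sum_mul_boole_mul (w : ι → ℝ) (b : ι) :
    ∑ a, p a * ((if b = a then 1 else 0) * w a) = p b * w b := by
  simp

theorem centeredSecondMoment_boole_mul_le (hp0 : ∀ a, 0 ≤ p a) (hp : ∑ a, p a = 1)
    (w : ι → ℝ) (b a₀ : ι) :
    centeredSecondMoment p (fun a => (if b = a then 1 else 0) * w a) a₀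
      ≤ p b * w b ^ 2 + (if b = a₀ then 1 else 0) * w a₀ ^ 2 := by
  have second_moment : ∑ a, p a * ((if b = a then 1 else 0) * w a) ^ 2 = p b * w b ^ 2 := by
    simpa only [mul_pow, ite_pow, one_pow, zero_pow two_ne_zero] using
      sum_mul_boole_mul (p := p) (fun a => w a ^ 2) b
  rw [centeredSecondMoment, sum_mul_sub_sq_eq hp, second_moment, sum_mul_boole_mul]
  split_ifs with hb
  · subst hb
    nlinarith [mul_nonneg (hp0 b) (sq_nonneg (w b))]
  · simp

end CenteredSecondMoment

theorem integral_comp_eq_sum {H ι : Type*} [MeasurableSpace H] [Fintype ι] [MeasurableSpace ι]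
    [MeasurableSingletonClass ι] (Q : Measure H) [IsFiniteMeasure Q] {e : H → ι}
    (he : Measurable e) (φ : ι → ℝ) :
    ∫ h, φ (e h) ∂Q = ∑ b, (Q {h | e h = b}).toReal * φ b := by
  rw [← integral_map he.aemeasurable Integrable.of_finite.aestronglyMeasurable,
    integral_fintype Integrable.of_finite]
  refine Finset.sum_congr rfl fun b _ => ?_
  rw [measureReal_def, Measure.map_apply he (measurableSet_singleton b), smul_eq_mul]
  rfl

theorem div_rpow_sq {p : ℝ} (hp : 0 ≤ p) (c α : ℝ) :
    (c / p ^ α) ^ 2 = c ^ 2 / p ^ (2 * α) := by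
  rw [div_pow, mul_comm, ← Real.rpow_mul_natCast hp]
  norm_num

theorem posterior_second_moment_bound_general
    {X : Type*} [MeasurableSpace X] {K : ℕ}
    {H : Type*} [MeasurableSpace H]
    (p0 c : X → Fin K → ℝ)
    (hp0pos : ∀ x a, 0 < p0 x a) (hp0sum : ∀ x, ∑ a, p0 x a = 1)
    (ev : H → X → Fin K)
    (hev : Measurable fun q : H × X => ev q.1 q.2)
    (n : ℕ) (x : Fin n → X) (av : Fin n → Fin K)
    (α : ℝ)
    (f : Fin n → Fin K → H → ℝ)
    (hf : ∀ (i : Fin n) (a' : Fin K) (h : H), f i a' h =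
      (∑ a, p0 (x i) a * ((if ev h (x i) = a then (1 : ℝ) else 0) * c (x i) a
          / p0 (x i) a ^ α))
        - (if ev h (x i) = a' then (1 : ℝ) else 0) * c (x i) a' / p0 (x i) a' ^ α)
    (Q : Measure H) [IsProbabilityMeasure Q] :
    (∫ h, ∑ i, ((∑ a, p0 (x i) a * f i a h ^ 2) + f i (av i) h ^ 2) ∂Q)
      ≤ ∑ i, ((∑ a, p0 (x i) a * ((Q {h | ev h (x i) = a}).toReal * c (x i) a ^ 2
            / p0 (x i) a ^ (2 * α)))
          + (Q {h | ev h (x i) = av i}).toReal * c (x i) (av i) ^ 2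
              / p0 (x i) (av i) ^ (2 * α)) := by
  have he : ∀ i, Measurable fun h => ev h (x i) := fun i =>
    hev.comp (measurable_id.prodMk measurable_const)
  let w : Fin n → Fin K → ℝ := fun i a => c (x i) a / p0 (x i) a ^ α
  let L : Fin n → Fin K → ℝ := fun i b =>
    centeredSecondMoment (p0 (x i)) (fun a => (if b = a then 1 else 0) * w i a) (av i)
  have integrand_eq : ∀ h, ∑ i, ((∑ a, p0 (x i) a * f i a h ^ 2) + f i (av i) h ^ 2)
      = ∑ i, L i (ev h (x i)) := fun h => by
    simp only [L, w, centeredSecondMoment, hf, mul_div_assoc]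
  calc (∫ h, ∑ i, ((∑ a, p0 (x i) a * f i a h ^ 2) + f i (av i) h ^ 2) ∂Q)
      = ∑ i, ∑ b, (Q {h | ev h (x i) = b}).toReal * L i b := by
        simp_rw [integrand_eq]
        have integrable : ∀ i, Integrable (fun h => L i (ev h (x i))) Q := fun i =>
          Integrable.of_finite.comp_measurable (g := L i) (he i)
        rw [integral_finsetSum _ fun i _ => integrable i]
        simp only [integral_comp_eq_sum Q (he _)]
    _ ≤ ∑ i, ∑ b, (Q {h | ev h (x i) = b}).toReal
          * (p0 (x i) b * w i b ^ 2 + (if b = av i then 1 else 0) * w i (av i) ^ 2) := by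
        gcongr with i _ b _
        exact centeredSecondMoment_boole_mul_le (fun a => (hp0pos _ a).le) (hp0sum _) _ _ _
    _ = _ := by
        refine Finset.sum_congr rfl fun i _ => ?_
        simp only [w, div_rpow_sq (hp0pos _ _).le, mul_add, Finset.sum_add_distrib, boole_mul,
          mul_div_assoc, mul_ite, mul_zero, Finset.sum_ite_eq', Finset.mem_univ, if_true]
        congr 1
        exact Finset.sum_congr rfl fun a _ => by ring

/-- **Posterior-averaged second-moment bound.**  For fixed contexts `x i` and actions
`av i`, the posterior expectation of the sum of conditional and empirical squared martingale
increments is bounded by the corresponding second-moment terms of the induced policy `π_Q`. -/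
theorem posterior_second_moment_bound
    {X : Type*} [MeasurableSpace X] {K : ℕ}
    {H : Type*} [MeasurableSpace H]
    (p0 c : X → Fin K → ℝ)
    (hp0pos : ∀ x a, 0 < p0 x a) (hp0sum : ∀ x, ∑ a, p0 x a = 1)
    (hc : ∀ x a, c x a ∈ Set.Icc (-1 : ℝ) 0)
    (ev : H → X → Fin K)
    (hev : Measurable fun q : H × X => ev q.1 q.2)
    (n : ℕ) (x : Fin n → X) (av : Fin n → Fin K)
    (α : ℝ) (hα : α ∈ Set.Icc (0 : ℝ) 1)
    (f : Fin n → Fin K → H → ℝ)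
    (hf : ∀ (i : Fin n) (a' : Fin K) (h : H), f i a' h =
      (∑ a, p0 (x i) a * ((if ev h (x i) = a then (1 : ℝ) else 0) * c (x i) a
          / p0 (x i) a ^ α))
        - (if ev h (x i) = a' then (1 : ℝ) else 0) * c (x i) a' / p0 (x i) a' ^ α)
    (Q : Measure H) [IsProbabilityMeasure Q] :
    (∫ h, ∑ i, ((∑ a, p0 (x i) a * f i a h ^ 2) + f i (av i) h ^ 2) ∂Q)
      ≤ ∑ i, ((∑ a, p0 (x i) a * ((Q {h | ev h (x i) = a}).toReal * c (x i) a ^ 2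
            / p0 (x i) a ^ (2 * α)))
          + (Q {h | ev h (x i) = av i}).toReal * c (x i) (av i) ^ 2
              / p0 (x i) (av i) ^ (2 * α)) :=
  posterior_second_moment_bound_general p0 c hp0pos hp0sum ev hev n x av α f hf Q
end
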